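/- Let X be a topological space. The following are equivalent: (i) for all subsets A, B ⊆ X, closure(A) ⊆ B if and only if A ⊆ interior(B) (i.e. topological closure and interior form an adjunction on the power set of X); (ii) every subset A ⊆ X is closed if and only if it is open. -/

import Mathlib

/-!
With `A = B` the adjunction reads `closure A ⊆ A ↔ A ⊆ interior A`, i.e. `IsClosed A ↔ IsOpen A`.
Conversely, if closed and open sets coincide, then `closure A` is open and `interior B` is closed,
which gives the unit `A ⊆ interior (closure A)` and the counit `closure (interior B) ⊆ B`.
-/

section

variable {X : Type*} [TopologicalSpace X]

theorem isClosed_iff_isOpen_of_gc_closure_interior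
    (h : GaloisConnection (closure : Set X → Set X) interior) (A : Set X) :
    IsClosed A ↔ IsOpen A := by
  rw [← closure_subset_iff_isClosed, ← subset_interior_iff_isOpen]
  exact h A A

theorem gc_closure_interior_of_isClosed_iff_isOpen (h : ∀ A : Set X, IsClosed A ↔ IsOpen A) :
    GaloisConnection (closure : Set X → Set X) interior :=
  GaloisConnection.monotone_intro (fun _ _ ↦ interior_mono) (fun _ _ ↦ closure_mono)
    (fun _ ↦ subset_closure.trans_eq ((h _).1 isClosed_closure).interior_eq.symm)
    (fun _ ↦ ((h _).2 isOpen_interior).closure_eq.trans_subset interior_subset)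

end

theorem closure_interior_adjunction_iff_clopen {X : Type*} [TopologicalSpace X] :
    (∀ A B : Set X, closure A ⊆ B ↔ A ⊆ interior B) ↔
    (∀ A : Set X, IsClosed A ↔ IsOpen A) :=
  ⟨isClosed_iff_isOpen_of_gc_closure_interior, gc_closure_interior_of_isClosed_iff_isOpen⟩
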